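/- arXiv:1902.05798 — 2 statements merged into one kernel-verified Lean document; each statement's English description precedes it below -/
import Mathlib

section
/- Let Ω, λ, u, α, θ₀, h, Γ_h^−, Γ_h^+, ν⁻, ν⁺ be as in the context, and let n ≥ 3 be an integer. Suppose Γ_h^+ is a singular line of u, i.e., ∇u(x)·ν⁺ = 0 for all x ∈ Γ_h^+, and Γ_h^− is a generalized singular line of u with constant parameter C₁ ∈ ℂ, C₁ ≠ 0, i.e., ∇u(x)·ν⁻ + C₁·u(x) = 0 for all x ∈ Γ_h^−. If u(0) = 0 and α ≠ q/p for all integers p, q with 1 ≤ p ≤ n−1 and 1 ≤ q ≤ p−1, then u vanishes at 0 up to order n, i.e., every partial derivative of u of order strictly less than n vanishes at 0. -/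
/-!
Write `a i j = ∂₁^i ∂₂^j u(0)`. The Helmholtz equation gives
`a (i+2) j + a i (j+2) = -λ a i j`, the generalized singular line along the `x₁`-axis gives
`a m 1 = C₁ a m 0`, and differentiating `∂_ν⁺ u = 0` along `Γ_h^+` gives one linear relation
among the coefficients of each order. Induct on the order `N < n`: once all lower orders
vanish, the first two relations force `a (N-j) j = Re(iʲ) · a N 0`, and then the relation
coming from `Γ_h^+` is the real part of `i (cos θ₀ + i sin θ₀)^N · a N 0`, i.e.
`-sin (N θ₀) · a N 0 = 0`. Since `α` is not a fraction `q/p` with `p < n`, `sin (N θ₀) ≠ 0`.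
-/

/-- First partial derivative of `u : ℝ × ℝ → ℂ` in the `x₁` direction. -/
noncomputable def pd1 (u : ℝ × ℝ → ℂ) : ℝ × ℝ → ℂ := fun x => fderiv ℝ u x (1, 0)

/-- First partial derivative of `u : ℝ × ℝ → ℂ` in the `x₂` direction. -/
noncomputable def pd2 (u : ℝ × ℝ → ℂ) : ℝ × ℝ → ℂ := fun x => fderiv ℝ u x (0, 1)

open Set Filter Topology Finset Complex

section DirDeriv

variable {E : Type*} [NormedAddCommGroup E] [NormedSpace ℝ E] {B : Set E} {f g : E → ℂ}
  {v w x : E}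

noncomputable def dirDeriv (v : E) (g : E → ℂ) : E → ℂ := fun x => fderiv ℝ g x v

protected theorem AnalyticOnNhd.dirDeriv (hg : AnalyticOnNhd ℝ g B) :
    AnalyticOnNhd ℝ (dirDeriv v g) B :=
  (ContinuousLinearMap.apply ℝ ℂ v).comp_analyticOnNhd hg.fderiv

theorem AnalyticOnNhd.iterate_dirDeriv (hg : AnalyticOnNhd ℝ g B) (k : ℕ) :
    AnalyticOnNhd ℝ ((dirDeriv v)^[k] g) B := by
  induction k with
  | zero => exact hg
  | succ k ih => rw [Function.iterate_succ_apply']; exact ih.dirDeriv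

theorem dirDeriv_congr (hB : IsOpen B) (hfg : EqOn f g B) (hx : x ∈ B) :
    dirDeriv v f x = dirDeriv v g x := by
  rw [dirDeriv, dirDeriv, (eventuallyEq_of_mem (hB.mem_nhds hx) hfg).fderiv_eq]

theorem iterate_dirDeriv_congr (hB : IsOpen B) (hfg : EqOn f g B) (k : ℕ) :
    EqOn ((dirDeriv v)^[k] f) ((dirDeriv v)^[k] g) B := by
  induction k with
  | zero => exact hfg
  | succ k ih =>
    intro x hx
    simp only [Function.iterate_succ_apply']
    exact dirDeriv_congr hB ih hx

theorem dirDeriv_comm (hg : AnalyticOnNhd ℝ g B) (hx : x ∈ B) :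
    dirDeriv v (dirDeriv w g) x = dirDeriv w (dirDeriv v g) x := by
  have hsnd (v w : E) : dirDeriv v (dirDeriv w g) x = fderiv ℝ (fderiv ℝ g) x v w := by
    change fderiv ℝ (fun y => fderiv ℝ g y w) x v = _
    rw [fderiv_clm_apply (hg.fderiv x hx).differentiableAt (differentiableAt_const w)]
    simp
  rw [hsnd, hsnd]
  exact ((hg x hx).contDiffAt (n := 2)).isSymmSndFDerivAt (by simp) v w

theorem dirDeriv_iterate_dirDeriv_comm (hB : IsOpen B) (hg : AnalyticOnNhd ℝ g B) (k : ℕ) :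
    EqOn (dirDeriv w ((dirDeriv v)^[k] g)) ((dirDeriv v)^[k] (dirDeriv w g)) B := by
  induction k with
  | zero => exact fun _ _ => rfl
  | succ k ih =>
    intro x hx
    simp only [Function.iterate_succ_apply']
    rw [dirDeriv_comm (hg.iterate_dirDeriv k) hx]
    exact dirDeriv_congr hB ih hx

theorem iterate_dirDeriv_add (hB : IsOpen B) (hf : AnalyticOnNhd ℝ f B)
    (hg : AnalyticOnNhd ℝ g B) (k : ℕ) :
    EqOn ((dirDeriv v)^[k] (f + g)) ((dirDeriv v)^[k] f + (dirDeriv v)^[k] g) B := by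
  induction k with
  | zero => exact fun _ _ => rfl
  | succ k ih =>
    intro x hx
    simp only [Function.iterate_succ_apply', Pi.add_apply]
    rw [dirDeriv_congr hB ih hx, dirDeriv, fderiv_add
      ((hf.iterate_dirDeriv k x hx).differentiableAt)
      ((hg.iterate_dirDeriv k x hx).differentiableAt)]
    rfl

theorem iterate_dirDeriv_smul (hB : IsOpen B) (hg : AnalyticOnNhd ℝ g B) (c : ℂ) (k : ℕ) :
    EqOn ((dirDeriv v)^[k] (c • g)) (c • (dirDeriv v)^[k] g) B := by
  induction k with
  | zero => exact fun _ _ => rfl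
  | succ k ih =>
    intro x hx
    simp only [Function.iterate_succ_apply', Pi.smul_apply]
    rw [dirDeriv_congr hB ih hx, dirDeriv,
      fderiv_const_smul ((hg.iterate_dirDeriv k x hx).differentiableAt)]
    rfl

theorem dirDeriv_smul_add_smul (a b : ℝ) (v w : E) (g : E → ℂ) :
    dirDeriv (a • v + b • w) g = (a : ℂ) • dirDeriv v g + (b : ℂ) • dirDeriv w g := by
  ext x
  simp [dirDeriv, Complex.real_smul]

theorem eventually_dirDeriv_eq_zero_along_line (hB : IsOpen B) (hg : AnalyticOnNhd ℝ g B)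
    (h0 : 0 ∈ B) (hvan : ∀ᶠ t in 𝓝 (0 : ℝ), g (t • v) = 0) :
    ∀ᶠ t in 𝓝 (0 : ℝ), dirDeriv v g (t • v) = 0 := by
  have hB' : ∀ᶠ t in 𝓝 (0 : ℝ), t • v ∈ B := by
    have : Tendsto (fun t : ℝ => t • v) (𝓝 0) (𝓝 0) :=
      (continuous_id.smul continuous_const).tendsto' 0 0 (zero_smul ℝ v)
    exact this.eventually (hB.mem_nhds h0)
  filter_upwards [hvan.eventually_nhds, hB'] with t ht hmem
  have hlin : HasDerivAt (fun s : ℝ => s • v) v t := by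
    simpa using (hasDerivAt_id t).smul_const v
  have hchain : HasDerivAt (fun s : ℝ => g (s • v)) (dirDeriv v g (t • v)) t :=
    (hg _ hmem).differentiableAt.hasFDerivAt.comp_hasDerivAt t hlin
  have ht' : (fun s : ℝ => g (s • v)) =ᶠ[𝓝 t] fun _ => 0 := ht
  rw [← hchain.deriv, ht'.deriv_eq, deriv_const]

theorem iterate_dirDeriv_eq_zero_of_eq_zero_on_ray (hB : IsOpen B) (hg : AnalyticOnNhd ℝ g B)
    (h0 : 0 ∈ B) {ε : ℝ} (hε : 0 < ε) (hray : ∀ t ∈ Set.Ioo 0 ε, g (t • v) = 0) (m : ℕ) :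
    (dirDeriv v)^[m] g 0 = 0 := by
  have hline : AnalyticAt ℝ (fun t : ℝ => g (t • v)) 0 :=
    AnalyticAt.comp (f := fun t : ℝ => t • v) (by simpa using hg 0 h0)
      (analyticAt_id.smul analyticAt_const)
  have hvan : ∀ᶠ t in 𝓝 (0 : ℝ), g (t • v) = 0 := by
    refine hline.frequently_zero_iff_eventually_zero.mp ?_
    have hright : ∀ᶠ t in 𝓝[>] (0 : ℝ), g (t • v) = 0 :=
      eventually_of_mem (Ioo_mem_nhdsGT hε) hray
    exact hright.frequently.filter_mono (nhdsWithin_mono _ fun t ht => ne_of_gt ht)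
  have hiter : ∀ k, ∀ᶠ t in 𝓝 (0 : ℝ), (dirDeriv v)^[k] g (t • v) = 0 := by
    intro k
    induction k with
    | zero => exact hvan
    | succ k ih =>
      simp only [Function.iterate_succ_apply']
      exact eventually_dirDeriv_eq_zero_along_line hB (hg.iterate_dirDeriv k) h0 ih
  simpa using (hiter m).self_of_nhds

end DirDeriv

section MixedPartial

variable {B : Set (ℝ × ℝ)} {f g : ℝ × ℝ → ℂ} {x : ℝ × ℝ}

noncomputable def mixedPartial (i j : ℕ) (g : ℝ × ℝ → ℂ) : ℝ × ℝ → ℂ := pd1^[i] (pd2^[j] g)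

theorem pd1_eq_dirDeriv : pd1 = dirDeriv (1, 0) := rfl

theorem pd2_eq_dirDeriv : pd2 = dirDeriv (0, 1) := rfl

protected theorem AnalyticOnNhd.mixedPartial (hg : AnalyticOnNhd ℝ g B) (i j : ℕ) :
    AnalyticOnNhd ℝ (mixedPartial i j g) B :=
  (hg.iterate_dirDeriv j).iterate_dirDeriv i

theorem mixedPartial_congr (hB : IsOpen B) (hfg : EqOn f g B) (i j : ℕ) :
    EqOn (mixedPartial i j f) (mixedPartial i j g) B :=
  iterate_dirDeriv_congr hB (iterate_dirDeriv_congr hB hfg j) i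

theorem mixedPartial_zero_fun (i j : ℕ) : mixedPartial i j (0 : ℝ × ℝ → ℂ) = 0 := by
  have hzero (v : ℝ × ℝ) : dirDeriv v (0 : ℝ × ℝ → ℂ) = 0 := by
    ext x; simp [dirDeriv]
  rw [mixedPartial, pd1_eq_dirDeriv, pd2_eq_dirDeriv, Function.iterate_fixed (hzero _),
    Function.iterate_fixed (hzero _)]

theorem mixedPartial_add (hB : IsOpen B) (hf : AnalyticOnNhd ℝ f B) (hg : AnalyticOnNhd ℝ g B)
    (i j : ℕ) : EqOn (mixedPartial i j (f + g)) (mixedPartial i j f + mixedPartial i j g) B :=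
  fun _ hx => (iterate_dirDeriv_congr hB (iterate_dirDeriv_add hB hf hg j) i hx).trans
    (iterate_dirDeriv_add hB (hf.iterate_dirDeriv j) (hg.iterate_dirDeriv j) i hx)

theorem mixedPartial_smul (hB : IsOpen B) (hg : AnalyticOnNhd ℝ g B) (c : ℂ) (i j : ℕ) :
    EqOn (mixedPartial i j (c • g)) (c • mixedPartial i j g) B :=
  fun _ hx => (iterate_dirDeriv_congr hB (iterate_dirDeriv_smul hB hg c j) i hx).trans
    (iterate_dirDeriv_smul hB (hg.iterate_dirDeriv j) c i hx)

theorem pd1_mixedPartial (i j : ℕ) (g : ℝ × ℝ → ℂ) :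
    pd1 (mixedPartial i j g) = mixedPartial (i + 1) j g :=
  (Function.iterate_succ_apply' pd1 i _).symm

theorem pd2_mixedPartial (hB : IsOpen B) (hg : AnalyticOnNhd ℝ g B) (i j : ℕ) :
    EqOn (pd2 (mixedPartial i j g)) (mixedPartial i (j + 1) g) B := by
  intro x hx
  rw [mixedPartial, mixedPartial, Function.iterate_succ_apply' pd2]
  exact dirDeriv_iterate_dirDeriv_comm hB (hg.iterate_dirDeriv j) i hx

theorem mixedPartial_pd1 (hB : IsOpen B) (hg : AnalyticOnNhd ℝ g B) (i j : ℕ) :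
    EqOn (mixedPartial i j (pd1 g)) (mixedPartial (i + 1) j g) B := by
  intro x hx
  rw [mixedPartial, mixedPartial, Function.iterate_succ_apply pd1]
  exact iterate_dirDeriv_congr hB
    (fun y hy => (dirDeriv_iterate_dirDeriv_comm hB hg j hy).symm) i hx

theorem mixedPartial_pd2 (i j : ℕ) (g : ℝ × ℝ → ℂ) :
    mixedPartial i j (pd2 g) = mixedPartial i (j + 1) g := by
  rw [mixedPartial, mixedPartial, Function.iterate_succ_apply pd2]

theorem dirDeriv_prodMk (a b : ℝ) (g : ℝ × ℝ → ℂ) :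
    dirDeriv (a, b) g = (a : ℂ) • pd1 g + (b : ℂ) • pd2 g := by
  rw [pd1_eq_dirDeriv, pd2_eq_dirDeriv, ← dirDeriv_smul_add_smul]
  simp

theorem iterate_dirDeriv_prodMk (hB : IsOpen B) (hg : AnalyticOnNhd ℝ g B) (a b : ℝ) (m : ℕ) :
    EqOn ((dirDeriv (a, b))^[m] g) (fun x => ∑ ij ∈ antidiagonal m,
      (m.choose ij.1 : ℂ) * ((a : ℂ) ^ ij.1 * (b : ℂ) ^ ij.2 * mixedPartial ij.1 ij.2 g x)) B := by
  induction m with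
  | zero => intro x _; simp [mixedPartial]
  | succ m ih =>
    intro x hx
    rw [Function.iterate_succ_apply', dirDeriv_congr hB ih hx]
    have hstep (i j : ℕ) : dirDeriv (a, b) (mixedPartial i j g) x =
        a * mixedPartial (i + 1) j g x + b * mixedPartial i (j + 1) g x := by
      rw [dirDeriv_prodMk, Pi.add_apply, Pi.smul_apply, Pi.smul_apply, pd1_mixedPartial,
        pd2_mixedPartial hB hg i j hx, smul_eq_mul, smul_eq_mul]
    have hsum : dirDeriv (a, b) (fun y => ∑ ij ∈ antidiagonal m,
        (m.choose ij.1 : ℂ) * ((a : ℂ) ^ ij.1 * (b : ℂ) ^ ij.2 * mixedPartial ij.1 ij.2 g y)) x =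
        ∑ ij ∈ antidiagonal m, (m.choose ij.1 : ℂ) * ((a : ℂ) ^ ij.1 * (b : ℂ) ^ ij.2 *
          dirDeriv (a, b) (mixedPartial ij.1 ij.2 g) x) := by
      have hdiff (i j : ℕ) : DifferentiableAt ℝ (mixedPartial i j g) x :=
        (hg.mixedPartial i j x hx).differentiableAt
      simp only [dirDeriv]
      rw [fderiv_fun_sum fun ij _ => ((hdiff ij.1 ij.2).const_mul _).const_mul _]
      simp only [_root_.sum_apply]
      refine sum_congr rfl fun ij _ => ?_
      rw [fderiv_const_mul ((hdiff ij.1 ij.2).const_mul _), fderiv_const_mul (hdiff ij.1 ij.2)]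
      rfl
    beta_reduce
    rw [hsum, sum_antidiagonal_choose_succ_mul
      (fun i j => (a : ℂ) ^ i * (b : ℂ) ^ j * mixedPartial i j g x), add_comm]
    simp only [hstep, ← sum_add_distrib]
    refine sum_congr rfl fun ij hij => ?_
    rw [Nat.choose_symm_of_eq_add (mem_antidiagonal.mp hij).symm]
    ring

theorem iteratedFDeriv_eq_zero_of_mixedPartial_eq_zero (hB : IsOpen B) (hx : x ∈ B) (k : ℕ)
    (hg : AnalyticOnNhd ℝ g B) (hg0 : ∀ i j, i + j = k → mixedPartial i j g x = 0) :
    iteratedFDeriv ℝ k g x = 0 := by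
  induction k generalizing g with
  | zero =>
    ext m
    exact hg0 0 0 rfl
  | succ k ih =>
    have hpartial (v : ℝ × ℝ) (m : Fin k → ℝ × ℝ) :
        iteratedFDeriv ℝ k (fderiv ℝ g) x m v = iteratedFDeriv ℝ k (dirDeriv v g) x m := by
      have := (ContinuousLinearMap.apply ℝ ℂ v).iteratedFDeriv_comp_left
        ((hg.fderiv x hx).contDiffAt (n := k)) le_rfl
      rw [show dirDeriv v g = ContinuousLinearMap.apply ℝ ℂ v ∘ fderiv ℝ g from rfl, this]
      rfl
    have h1 : iteratedFDeriv ℝ k (pd1 g) x = 0 :=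
      ih hg.dirDeriv fun i j hij => by
        rw [mixedPartial_pd1 hB hg i j hx]; exact hg0 _ _ (by omega)
    have h2 : iteratedFDeriv ℝ k (pd2 g) x = 0 :=
      ih hg.dirDeriv fun i j hij => by
        rw [mixedPartial_pd2]; exact hg0 _ _ (by omega)
    ext m
    rw [iteratedFDeriv_succ_apply_right]
    obtain ⟨a, b⟩ := m (Fin.last k)
    have hab : ((a, b) : ℝ × ℝ) = a • (1, 0) + b • (0, 1) := by simp
    rw [hab, map_add, map_smul, map_smul, hpartial, hpartial, ← pd1_eq_dirDeriv,
      ← pd2_eq_dirDeriv, h1, h2]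
    simp

end MixedPartial

section Coefficients

variable {Ω : Set (ℝ × ℝ)} {u : ℝ × ℝ → ℂ}

theorem mixedPartial_helmholtz (hΩ : IsOpen Ω) (hu : AnalyticOnNhd ℝ u Ω) {lam : ℂ}
    (hpde : ∀ x ∈ Ω, pd1 (pd1 u) x + pd2 (pd2 u) x + lam * u x = 0) (i j : ℕ) {x : ℝ × ℝ}
    (hx : x ∈ Ω) :
    mixedPartial (i + 2) j u x + mixedPartial i (j + 2) u x + lam * mixedPartial i j u x = 0 := by
  have hu1 : AnalyticOnNhd ℝ (pd1 u) Ω := hu.dirDeriv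
  have hu2 : AnalyticOnNhd ℝ (pd2 u) Ω := hu.dirDeriv
  have hu11 : AnalyticOnNhd ℝ (pd1 (pd1 u)) Ω := hu1.dirDeriv
  have hu22 : AnalyticOnNhd ℝ (pd2 (pd2 u)) Ω := hu2.dirDeriv
  have hzero := mixedPartial_congr hΩ (f := pd1 (pd1 u) + pd2 (pd2 u) + lam • u) (g := 0)
    hpde i j hx
  rw [mixedPartial_add hΩ (hu11.add hu22) hu.const_smul i j hx, Pi.add_apply,
    mixedPartial_add hΩ hu11 hu22 i j hx, Pi.add_apply,
    mixedPartial_smul hΩ hu lam i j hx, mixedPartial_pd1 hΩ hu1 i j hx,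
    mixedPartial_pd1 hΩ hu (i + 1) j hx, mixedPartial_pd2, mixedPartial_pd2,
    mixedPartial_zero_fun] at hzero
  exact hzero

theorem mixedPartial_robin (hΩ : IsOpen Ω) (hu : AnalyticOnNhd ℝ u Ω) (h0 : 0 ∈ Ω) {C : ℂ}
    {ε : ℝ} (hε : 0 < ε) (hbc : ∀ t ∈ Set.Ioo 0 ε, fderiv ℝ u (t, 0) (0, -1) + C * u (t, 0) = 0)
    (m : ℕ) : mixedPartial m 1 u 0 = C * mixedPartial m 0 u 0 := by
  have hu2 : AnalyticOnNhd ℝ (pd2 u) Ω := hu.dirDeriv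
  have hray : ∀ t ∈ Set.Ioo 0 ε, ((-1 : ℂ) • pd2 u + C • u) (t • (1, 0)) = 0 := by
    intro t ht
    have hneg : ((0 : ℝ), (-1 : ℝ)) = -((0 : ℝ), (1 : ℝ)) := by simp
    have := hbc t ht
    rw [hneg, map_neg] at this
    simpa [pd2] using this
  have hzero := iterate_dirDeriv_eq_zero_of_eq_zero_on_ray hΩ
    (hu2.const_smul.add hu.const_smul) h0 hε hray m
  change mixedPartial m 0 _ 0 = 0 at hzero
  rw [mixedPartial_add hΩ hu2.const_smul hu.const_smul m 0 h0, Pi.add_apply,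
    mixedPartial_smul hΩ hu2 _ m 0 h0, mixedPartial_smul hΩ hu _ m 0 h0, mixedPartial_pd2] at hzero
  simp only [Pi.smul_apply, smul_eq_mul] at hzero
  linear_combination -hzero

theorem sum_mixedPartial_neumann_ray (hΩ : IsOpen Ω) (hu : AnalyticOnNhd ℝ u Ω) (h0 : 0 ∈ Ω)
    {θ ε : ℝ} (hε : 0 < ε)
    (hbc : ∀ t ∈ Set.Ioo 0 ε,
      fderiv ℝ u (t * Real.cos θ, t * Real.sin θ) (-Real.sin θ, Real.cos θ) = 0)
    (m : ℕ) :
    ∑ ij ∈ antidiagonal m, (m.choose ij.1 : ℂ) *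
      ((Real.cos θ : ℂ) ^ ij.1 * (Real.sin θ : ℂ) ^ ij.2 *
        (-Real.sin θ * mixedPartial (ij.1 + 1) ij.2 u 0 +
          Real.cos θ * mixedPartial ij.1 (ij.2 + 1) u 0)) = 0 := by
  have hν : AnalyticOnNhd ℝ (dirDeriv (-Real.sin θ, Real.cos θ) u) Ω := hu.dirDeriv
  have hzero := iterate_dirDeriv_eq_zero_of_eq_zero_on_ray (v := (Real.cos θ, Real.sin θ))
    hΩ hν h0 hε hbc m
  rw [iterate_dirDeriv_prodMk hΩ hν _ _ m h0] at hzero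
  rw [← hzero]
  refine sum_congr rfl fun ij _ => ?_
  have hu1 : AnalyticOnNhd ℝ (pd1 u) Ω := hu.dirDeriv
  have hu2 : AnalyticOnNhd ℝ (pd2 u) Ω := hu.dirDeriv
  rw [dirDeriv_prodMk, mixedPartial_add hΩ hu1.const_smul hu2.const_smul _ _ h0, Pi.add_apply,
    mixedPartial_smul hΩ hu1 _ _ _ h0, mixedPartial_smul hΩ hu2 _ _ _ h0, Pi.smul_apply,
    Pi.smul_apply, mixedPartial_pd1 hΩ hu _ _ h0, mixedPartial_pd2]
  simp

end Coefficients

theorem eq_re_I_pow_mul_of_trace_eq_zero {a : ℕ → ℕ → ℂ} {N : ℕ}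
    (h1 : ∀ i, i + 1 = N → a i 1 = 0)
    (htrace : ∀ i j, i + j + 2 = N → a (i + 2) j + a i (j + 2) = 0) :
    ∀ i j, i + j = N → a i j = (I ^ j).re * a N 0
  | i, 0, h => by simp [← h]
  | i, 1, h => by simp [h1 i h]
  | i, j + 2, h => by
    rw [eq_neg_of_add_eq_zero_right (htrace i j (by omega)),
      eq_re_I_pow_mul_of_trace_eq_zero h1 htrace (i + 2) j (by omega), pow_add]
    simp

theorem sum_choose_cos_pow_sin_pow_re_I_pow (θ : ℝ) (m : ℕ) :
    ∑ ij ∈ antidiagonal m, (m.choose ij.1 : ℝ) * (Real.cos θ ^ ij.1 * Real.sin θ ^ ij.2 *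
      (-Real.sin θ * (I ^ ij.2).re + Real.cos θ * (I ^ (ij.2 + 1)).re))
      = -Real.sin ((m + 1) * θ) := by
  set c := Real.cos θ
  set s := Real.sin θ
  have hmoivre : ((c : ℂ) + s * I) ^ (m + 1) =
      Real.cos ((m + 1) * θ) + Real.sin ((m + 1) * θ) * I := by
    simp only [c, s, ofReal_cos, ofReal_sin, cos_add_sin_mul_I_pow]
    push_cast
    rfl
  calc _ = (∑ ij ∈ antidiagonal m,
        (m.choose ij.1 : ℂ) * ((c : ℂ) ^ ij.1 * (s * I) ^ ij.2) * (-s + c * I)).re := by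
        rw [re_sum]
        refine sum_congr rfl fun ij _ => ?_
        have hreal : (m.choose ij.1 : ℂ) * ((c : ℂ) ^ ij.1 * (s * I) ^ ij.2) * (-s + c * I)
            = ((m.choose ij.1 * c ^ ij.1 * s ^ ij.2 : ℝ) : ℂ) * (I ^ ij.2 * (-s + c * I)) := by
          push_cast; ring
        rw [hreal, re_ofReal_mul]
        simp [pow_succ]
        ring
    _ = (I * ((c : ℂ) + s * I) ^ (m + 1)).re := by
        have hbinom : ∑ ij ∈ antidiagonal m, (m.choose ij.1 : ℂ) * ((c : ℂ) ^ ij.1 * (s * I) ^ ij.2)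
            = ((c : ℂ) + s * I) ^ m := by
          rw [(Commute.all (c : ℂ) (s * I)).add_pow']
          simp [nsmul_eq_mul]
        have hrot : -(s : ℂ) + c * I = I * (c + s * I) := by
          ring_nf; rw [I_sq]; ring
        rw [← sum_mul, hbinom, hrot, pow_succ]
        ring_nf
    _ = -Real.sin ((m + 1) * θ) := by
        rw [hmoivre]
        simp only [mul_re, I_re, I_im, add_re, add_im, ofReal_re, ofReal_im, mul_im]
        ring

theorem sin_nat_mul_mul_pi_ne_zero {α : ℝ} {n : ℕ} (hα : α ∈ Set.Ioo 0 1)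
    (hαpq : ∀ p q : ℕ, 1 ≤ p → p ≤ n - 1 → 1 ≤ q → q ≤ p - 1 → α ≠ (q : ℝ) / (p : ℝ))
    {N : ℕ} (hN : 0 < N) (hNn : N < n) : Real.sin (N * (α * Real.pi)) ≠ 0 := by
  intro hsin
  obtain ⟨q, hq⟩ := Real.sin_eq_zero_iff.mp hsin
  have hqα : (q : ℝ) = N * α := by
    rw [← mul_assoc] at hq
    exact mul_right_cancel₀ Real.pi_ne_zero hq
  have hNpos : (0 : ℝ) < N := by exact_mod_cast hN
  have hq0 : 0 < q := by
    have : (0 : ℝ) < q := by rw [hqα]; exact mul_pos hNpos hα.1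
    exact_mod_cast this
  have hqN : q < N := by
    have : (q : ℝ) < N := by rw [hqα]; exact mul_lt_of_lt_one_right hNpos hα.2
    exact_mod_cast this
  lift q to ℕ using hq0.le
  refine hαpq N q hN (by omega) (by omega) (by omega) ?_
  rw [eq_div_iff hNpos.ne', mul_comm]
  exact_mod_cast hqα.symm

theorem coeff_eq_zero_of_helmholtz_robin_neumann {a : ℕ → ℕ → ℂ} {lam C : ℂ} {θ : ℝ} {n : ℕ}
    (hpde : ∀ i j, a (i + 2) j + a i (j + 2) + lam * a i j = 0)
    (hrobin : ∀ m, a m 1 = C * a m 0)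
    (hneumann : ∀ m, ∑ ij ∈ antidiagonal m, (m.choose ij.1 : ℂ) *
      ((Real.cos θ : ℂ) ^ ij.1 * (Real.sin θ : ℂ) ^ ij.2 *
        (-Real.sin θ * a (ij.1 + 1) ij.2 + Real.cos θ * a ij.1 (ij.2 + 1))) = 0)
    (hsin : ∀ N : ℕ, 0 < N → N < n → Real.sin (N * θ) ≠ 0) (h00 : a 0 0 = 0) :
    ∀ i j, i + j < n → a i j = 0 := by
  suffices h : ∀ N, N < n → ∀ i j, i + j = N → a i j = 0 from fun i j hij => h _ hij i j rfl
  intro N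
  induction N using Nat.strong_induction_on with
  | _ N ih =>
  intro hN i j hij
  rcases N with _ | m
  · obtain ⟨rfl, rfl⟩ : i = 0 ∧ j = 0 := by omega
    exact h00
  have hpattern := eq_re_I_pow_mul_of_trace_eq_zero (a := a) (N := m + 1)
    (fun i hi => by rw [hrobin, ih m (by omega) (by omega) i 0 (by omega), mul_zero])
    (fun i j hij => by simpa [ih (i + j) (by omega) (by omega) i j rfl] using hpde i j)
  have hlead : (-Real.sin ((m + 1) * θ) : ℂ) * a (m + 1) 0 = 0 := by
    rw [← hneumann m, ← ofReal_neg, ← sum_choose_cos_pow_sin_pow_re_I_pow, ofReal_sum, sum_mul]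
    refine sum_congr rfl fun ij hij => ?_
    have hij' := mem_antidiagonal.mp hij
    rw [hpattern (ij.1 + 1) ij.2 (by omega), hpattern ij.1 (ij.2 + 1) (by omega)]
    push_cast
    ring
  have hsin' : Real.sin ((m + 1) * θ) ≠ 0 := by exact_mod_cast hsin (m + 1) (by omega) hN
  have ha0 : a (m + 1) 0 = 0 :=
    (mul_eq_zero.mp hlead).resolve_left (neg_ne_zero.mpr (ofReal_ne_zero.mpr hsin'))
  rw [hpattern i j hij, ha0, mul_zero]

theorem stmt7_general
    (Ω : Set (ℝ × ℝ)) (hΩ : IsOpen Ω)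
    (lam : ℝ)
    (u : ℝ × ℝ → ℂ)
    (hu_an : AnalyticOnNhd ℝ u Ω)
    (hu_eq : ∀ x ∈ Ω, pd1 (pd1 u) x + pd2 (pd2 u) x + (lam : ℂ) * u x = 0)
    (α : ℝ) (hα : α ∈ Set.Ioo (0 : ℝ) 1)
    (θ₀ : ℝ) (hθ₀ : θ₀ = α * Real.pi)
    (h : ℝ) (hh : 0 < h)
    (hdisk : ∀ x : ℝ × ℝ, x.1 ^ 2 + x.2 ^ 2 ≤ h ^ 2 → x ∈ Ω)
    (n : ℕ)
    (C₁ : ℂ)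
    (hbc₁ : ∀ r : ℝ, 0 ≤ r → r ≤ h →
      fderiv ℝ u (r, 0) (0, -1) + C₁ * u (r, 0) = 0)
    (hsing_p : ∀ r : ℝ, 0 ≤ r → r ≤ h →
      fderiv ℝ u (r * Real.cos θ₀, r * Real.sin θ₀) (-Real.sin θ₀, Real.cos θ₀) = 0)
    (hu0 : u (0, 0) = 0)
    (hαpq : ∀ p q : ℕ, 1 ≤ p → p ≤ n - 1 → 1 ≤ q → q ≤ p - 1 → α ≠ (q : ℝ) / (p : ℝ)) :
    ∀ k : ℕ, k < n → iteratedFDeriv ℝ k u (0, 0) = 0 := by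
  subst hθ₀
  have h0 : (0 : ℝ × ℝ) ∈ Ω := hdisk 0 (by simp; positivity)
  have hcoeff := coeff_eq_zero_of_helmholtz_robin_neumann (a := fun i j => mixedPartial i j u 0)
    (fun i j => mixedPartial_helmholtz hΩ hu_an hu_eq i j h0)
    (mixedPartial_robin hΩ hu_an h0 hh fun t ht => hbc₁ t ht.1.le ht.2.le)
    (sum_mixedPartial_neumann_ray hΩ hu_an h0 hh fun t ht => hsing_p t ht.1.le ht.2.le)
    (fun N hN hNn => sin_nat_mul_mul_pi_ne_zero hα hαpq hN hNn) hu0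
  exact fun k hk => iteratedFDeriv_eq_zero_of_mixedPartial_eq_zero hΩ h0 k hu_an
    fun i j hij => hcoeff i j (hij ▸ hk)

/-- A singular line `Γ_h^+` and a generalized singular line `Γ_h^−` (constant parameter
`C₁ ≠ 0`) intersecting at the origin at angle `θ₀ = απ`, with `u 0 = 0` and the
rational-angle avoidance condition: the eigenfunction vanishes at `0` up to order `n`. -/
theorem stmt7
    (Ω : Set (ℝ × ℝ)) (hΩ : IsOpen Ω)
    (lam : ℝ) (hlam : 0 < lam)
    (u : ℝ × ℝ → ℂ)
    (hu_an : AnalyticOnNhd ℝ u Ω)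
    (hu_eq : ∀ x ∈ Ω, pd1 (pd1 u) x + pd2 (pd2 u) x + (lam : ℂ) * u x = 0)
    (α : ℝ) (hα : α ∈ Set.Ioo (0 : ℝ) 1)
    (θ₀ : ℝ) (hθ₀ : θ₀ = α * Real.pi)
    (h : ℝ) (hh : 0 < h)
    (hdisk : ∀ x : ℝ × ℝ, x.1 ^ 2 + x.2 ^ 2 ≤ h ^ 2 → x ∈ Ω)
    (n : ℕ) (hn : 3 ≤ n)
    (C₁ : ℂ) (hC₁ : C₁ ≠ 0)
    (hbc₁ : ∀ r : ℝ, 0 ≤ r → r ≤ h →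
      fderiv ℝ u (r, 0) (0, -1) + C₁ * u (r, 0) = 0)
    (hsing_p : ∀ r : ℝ, 0 ≤ r → r ≤ h →
      fderiv ℝ u (r * Real.cos θ₀, r * Real.sin θ₀) (-Real.sin θ₀, Real.cos θ₀) = 0)
    (hu0 : u (0, 0) = 0)
    (hαpq : ∀ p q : ℕ, 1 ≤ p → p ≤ n - 1 → 1 ≤ q → q ≤ p - 1 → α ≠ (q : ℝ) / (p : ℝ)) :
    ∀ k : ℕ, k < n → iteratedFDeriv ℝ k u (0, 0) = 0 :=
  stmt7_general Ω hΩ lam u hu_an hu_eq α hα θ₀ hθ₀ h hh hdisk n C₁ hbc₁ hsing_p hu0 hαpq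
end

section
/- Let Ω, λ, u, h, Γ_h^−, Γ_h^+, ν⁻, ν⁺ be as in the context, where now θ₀ = απ with α ∈ (0,2) irrational. Suppose Γ_h^− and Γ_h^+ are generalized singular lines of u with constant parameters C₁, C₂ ∈ ℂ respectively, i.e., ∇u(x)·ν⁻ + C₁·u(x) = 0 for all x ∈ Γ_h^− and ∇u(x)·ν⁺ + C₂·u(x) = 0 for all x ∈ Γ_h^+. Then: if u(0) = 0, every partial derivative of u of every order vanishes at 0 (infinite vanishing order); if u(0) ≠ 0, the vanishing order of u at 0 is 0. -/
/-!
Let `T` be the lowest-order nonvanishing derivative tensor of `u` at the corner, of order `N ≥ 1`.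
The Helmholtz equation makes `T` traceless (the term `λu` vanishes to higher order), so in the
complex coordinate `z` it is the coefficient tensor of a harmonic polynomial `A Re zᴺ + B Im zᴺ`.
The Robin condition on the first ray, whose term `C₁ u` also vanishes to order `N`, forces `B = 0`;
on the second ray it gives `A sin (N θ₀) = 0`, and `sin (N θ₀) ≠ 0` because `θ₀ / π` is irrational.
-/

open Filter Topology Function Complex
open scoped Finset

section Calculus

variable {𝕜 E F : Type*} [NontriviallyNormedField 𝕜] [NormedAddCommGroup E] [NormedSpace 𝕜 E]
  [NormedAddCommGroup F] [NormedSpace 𝕜 F]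

theorem iteratedFDeriv_fderiv_apply {f : E → F} {x : E} {n : ℕ}
    (hf : ContDiffAt 𝕜 (n + 1) f x) (v : E) (w : Fin n → E) :
    iteratedFDeriv 𝕜 n (fun y => fderiv 𝕜 f y v) x w =
      iteratedFDeriv 𝕜 (n + 1) f x (Fin.snoc w v) := by
  have hcomp : (fun y => fderiv 𝕜 f y v) = ContinuousLinearMap.apply 𝕜 F v ∘ fderiv 𝕜 f := rfl
  rw [iteratedFDeriv_succ_apply_right, Fin.init_snoc, Fin.snoc_last, hcomp,
    (ContinuousLinearMap.apply 𝕜 F v).iteratedFDeriv_comp_left (hf.fderiv_right le_rfl) le_rfl]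
  rfl

variable [CompleteSpace F]

theorem AnalyticAt.fderiv_apply {f : E → F} {x : E} (hf : AnalyticAt 𝕜 f x) (v : E) :
    AnalyticAt 𝕜 (fun y => fderiv 𝕜 f y v) x :=
  (ContinuousLinearMap.apply 𝕜 F v).analyticAt _ |>.comp hf.fderiv

theorem AnalyticAt.iteratedFDeriv_apply_const_eq_zero {g : E → F} {x y : E}
    (hg : AnalyticAt 𝕜 g x) (hzero : ∃ᶠ t in 𝓝[≠] (0 : 𝕜), g (x + t • y) = 0) (n : ℕ) :
    iteratedFDeriv 𝕜 n g x (fun _ => y) = 0 := by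
  have hline : Tendsto (fun t : 𝕜 => x + t • y) (𝓝 0) (𝓝 x) :=
    (by fun_prop : Continuous fun t : 𝕜 => x + t • y).tendsto' 0 x (by simp)
  have han : ∀ᶠ t in 𝓝 (0 : 𝕜), AnalyticAt 𝕜 g (x + t • y) :=
    hline.eventually hg.eventually_analyticAt
  have hdiag : ∀ k : ℕ, ∀ᶠ t in 𝓝 (0 : 𝕜), iteratedFDeriv 𝕜 k g (x + t • y) (fun _ => y) = 0 := by
    intro k
    induction k with
    | zero =>
      have h0 : AnalyticAt 𝕜 (fun t : 𝕜 => g (x + t • y)) 0 := by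
        refine AnalyticAt.comp (by simpa using hg) ?_
        fun_prop
      simpa using (h0.frequently_zero_iff_eventually_zero).mp hzero
    | succ k ih =>
      filter_upwards [(EventuallyEq.deriv (f := fun _ => (0 : F)) ih), han] with t ht hant
      rw [← hant.contDiffAt.of_le le_top |>.deriv_fderiv_add_smul, ht, deriv_const]
  simpa using (hdiag n).self_of_nhds

theorem AnalyticAt.iteratedFDeriv_snoc_add_smul_eq_zero {R : Type*} [NormedRing R] [Module R F]
    [IsBoundedSMul R F] [SMulCommClass 𝕜 R F] {u : E → F} {x e ν : E} {c : R}
    (hu : AnalyticAt 𝕜 u x)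
    (hrobin : ∃ᶠ t in 𝓝[≠] (0 : 𝕜), fderiv 𝕜 u (x + t • e) ν + c • u (x + t • e) = 0) (m : ℕ) :
    iteratedFDeriv 𝕜 (m + 1) u x (Fin.snoc (fun _ => e) ν) +
      c • iteratedFDeriv 𝕜 m u x (fun _ => e) = 0 := by
  have hg := ((hu.fderiv_apply ν).add (hu.const_smul (c := c))).iteratedFDeriv_apply_const_eq_zero
    hrobin m
  rwa [iteratedFDeriv_add_apply (hu.fderiv_apply ν).contDiffAt hu.const_smul.contDiffAt,
    iteratedFDeriv_const_smul_apply hu.contDiffAt, add_apply,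
    iteratedFDeriv_fderiv_apply hu.contDiffAt] at hg

end Calculus

theorem AnalyticAt.iteratedFDeriv_helmholtz {u : ℝ × ℝ → ℂ} {x : ℝ × ℝ} {lam : ℝ}
    (hu : AnalyticAt ℝ u x)
    (hpde : ∀ᶠ y in 𝓝 x, pd1 (pd1 u) y + pd2 (pd2 u) y + (lam : ℂ) * u y = 0) (k : ℕ)
    (w : Fin k → ℝ × ℝ) :
    iteratedFDeriv ℝ (k + 2) u x (Fin.snoc (Fin.snoc w (1, 0)) (1, 0)) +
      iteratedFDeriv ℝ (k + 2) u x (Fin.snoc (Fin.snoc w (0, 1)) (0, 1)) +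
        (lam : ℂ) * iteratedFDeriv ℝ k u x w = 0 := by
  have h₁ : ContDiffAt ℝ k (pd1 (pd1 u)) x :=
    ((hu.fderiv_apply (1, 0)).fderiv_apply (1, 0)).contDiffAt
  have h₂ : ContDiffAt ℝ k (pd2 (pd2 u)) x :=
    ((hu.fderiv_apply (0, 1)).fderiv_apply (0, 1)).contDiffAt
  have h₃ : ContDiffAt ℝ k (fun y => (lam : ℂ) • u y) x := hu.contDiffAt.const_smul _
  have hzero :
      iteratedFDeriv ℝ k (fun y => pd1 (pd1 u) y + pd2 (pd2 u) y + (lam : ℂ) • u y) x w = 0 := by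
    simp_rw [← smul_eq_mul (a := (lam : ℂ))] at hpde
    rw [(EventuallyEq.iteratedFDeriv ℝ (f₂ := fun _ => (0 : ℂ)) hpde k).eq_of_nhds]
    simp
  rw [fun_iteratedFDeriv_add_apply (h₁.add h₂) h₃, fun_iteratedFDeriv_add_apply h₁ h₂,
    iteratedFDeriv_const_smul_apply' hu.contDiffAt, add_apply, add_apply, smul_apply,
    smul_eq_mul] at hzero
  unfold pd1 pd2 at hzero
  rwa [iteratedFDeriv_fderiv_apply (hu.fderiv_apply _).contDiffAt,
    iteratedFDeriv_fderiv_apply (hu.fderiv_apply _).contDiffAt,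
    iteratedFDeriv_fderiv_apply hu.contDiffAt, iteratedFDeriv_fderiv_apply hu.contDiffAt] at hzero

section TracelessTensor

variable {F : Type*} [AddCommGroup F] [Module ℝ F] {n : ℕ}

/-- Harmonicity in tensor form: a homogeneous polynomial is harmonic iff its symmetric coefficient
tensor is traceless. -/
def IsTraceless (T : MultilinearMap ℝ (fun _ : Fin n => ℝ × ℝ) F) : Prop :=
  ∀ (v : Fin n → ℝ × ℝ) (i j : Fin n), i ≠ j →
    T (update (update v i (1, 0)) j (1, 0)) + T (update (update v i (0, 1)) j (0, 1)) = 0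

def axisTuple (s : Finset (Fin n)) : Fin n → ℝ × ℝ := fun i => if i ∈ s then (0, 1) else (1, 0)

theorem isTraceless_of_apply_snoc_snoc (T : MultilinearMap ℝ (fun _ : Fin (n + 2) => ℝ × ℝ) F)
    (hsymm : ∀ (v : Fin (n + 2) → ℝ × ℝ) (σ : Equiv.Perm (Fin (n + 2))), T (v ∘ σ) = T v)
    (htrace : ∀ w : Fin n → ℝ × ℝ,
      T (Fin.snoc (Fin.snoc w (1, 0)) (1, 0)) + T (Fin.snoc (Fin.snoc w (0, 1)) (0, 1)) = 0) :
    IsTraceless T := by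
  intro v i j hij
  obtain ⟨σ, hσ⟩ := Equiv.Perm.exists_extending_pair ![(Fin.last n).castSucc, Fin.last (n + 1)]
    ![i, j]
    (fun a b => by
      fin_cases a <;> fin_cases b <;>
        simp [(Fin.castSucc_lt_last _).ne, (Fin.castSucc_lt_last _).ne'])
    (fun a b => by fin_cases a <;> fin_cases b <;> simp [hij, hij.symm])
  have hσi : σ (Fin.last n).castSucc = i := hσ 0
  have hσj : σ (Fin.last (n + 1)) = j := hσ 1
  have hslots : ∀ a : ℝ × ℝ, update (update v i a) j a ∘ σ =
      Fin.snoc (Fin.snoc (fun l => v (σ l.castSucc.castSucc)) a) a := by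
    intro a
    ext1 l
    induction l using Fin.lastCases with
    | last => simp [hσj]
    | cast l =>
      induction l using Fin.lastCases with
      | last => simp [hσi, hij]
      | cast l =>
        have hli : σ l.castSucc.castSucc ≠ i := by
          rw [← hσi]; simp [(Fin.castSucc_lt_last l).ne]
        have hlj : σ l.castSucc.castSucc ≠ j := by
          rw [← hσj]; simp [(Fin.castSucc_lt_last l.castSucc).ne]
        simp [hli, hlj]
  rw [← hsymm _ σ, ← hsymm (update (update v i (0, 1)) j (0, 1)) σ, hslots, hslots]
  exact htrace _

section Symmetric

variable (T : MultilinearMap ℝ (fun _ : Fin n => ℝ × ℝ) F)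
  (hsymm : ∀ (v : Fin n → ℝ × ℝ) (σ : Equiv.Perm (Fin n)), T (v ∘ σ) = T v)
include hsymm

theorem apply_axisTuple_eq_of_card_eq {s t : Finset (Fin n)} (hst : #s = #t) :
    T (axisTuple s) = T (axisTuple t) := by
  obtain ⟨σ, hσ⟩ := Equiv.Perm.exists_map_finset_eq s t hst
  rw [← hsymm (axisTuple t) σ]
  congr 1
  ext1 i
  simp [axisTuple, ← hσ]

theorem IsTraceless.apply_axisTuple (htrace : IsTraceless T) (i₀ : Fin n) (s : Finset (Fin n)) :
    T (axisTuple s) = (I ^ #s).re • T (axisTuple ∅) + (I ^ #s).im • T (axisTuple {i₀}) := by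
  induction hs : #s using Nat.strong_induction_on generalizing s with
  | _ k ih =>
  match k, ih with
  | 0, _ => simp [Finset.card_eq_zero.mp hs]
  | 1, _ =>
    simpa using apply_axisTuple_eq_of_card_eq T hsymm (t := {i₀}) (by simpa using hs)
  | k + 2, ih =>
    obtain ⟨i, hi, j, hj, hij⟩ := Finset.one_lt_card.mp (by omega : 1 < #s)
    have hcard : #((s.erase i).erase j) = k := by
      rw [Finset.card_erase_of_mem (by simp [hj, hij.symm]), Finset.card_erase_of_mem hi, hs]
      omega
    have hlower :
        update (update (axisTuple s) i (1, 0)) j (1, 0) = axisTuple ((s.erase i).erase j) := by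
      ext1 l
      by_cases hl : l = j <;> by_cases hl' : l = i <;> simp_all [axisTuple]
    have hsame : update (update (axisTuple s) i (0, 1)) j (0, 1) = axisTuple s := by
      ext1 l
      by_cases hl : l = j <;> by_cases hl' : l = i <;> simp_all [axisTuple]
    have hrec := htrace (axisTuple s) i j hij
    rw [hlower, hsame, ih k (by omega) _ hcard] at hrec
    rw [eq_neg_of_add_eq_zero_right hrec, pow_add, I_sq]
    simp only [mul_neg, mul_one, neg_re, neg_im, neg_smul]
    abel

theorem IsTraceless.apply_eq (htrace : IsTraceless T) (i₀ : Fin n) (v : Fin n → ℝ × ℝ) :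
    T v = (∏ i, ((v i).1 + (v i).2 * I : ℂ)).re • T (axisTuple ∅) +
      (∏ i, ((v i).1 + (v i).2 * I : ℂ)).im • T (axisTuple {i₀}) := by
  let L : ℂ →ₗ[ℝ] F := reLm.smulRight (T (axisTuple ∅)) + imLm.smulRight (T (axisTuple {i₀}))
  have hζ : ∀ p : ℝ × ℝ, equivRealProdLm.symm p = p.1 + p.2 * I := equivRealProd_symm_apply
  have hT : T = L.compMultilinearMap ((MultilinearMap.mkPiAlgebra ℝ (Fin n) ℂ).compLinearMap
      fun _ => equivRealProdLm.symm.toLinearMap) := by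
    refine Module.Basis.ext_multilinear (fun _ => Module.Basis.finTwoProd ℝ) fun p => ?_
    have hp : (fun i => Module.Basis.finTwoProd ℝ (p i)) = axisTuple {i | p i = 1} := by
      ext1 i
      rcases Fin.exists_fin_two.mp ⟨p i, rfl⟩ with hpi | hpi <;> simp [axisTuple, hpi]
    have hbasis : ∀ i,
        equivRealProdLm.symm (axisTuple {i | p i = 1} i) = if p i = 1 then I else 1 := by
      intro i
      by_cases hpi : p i = 1 <;> simp [axisTuple, hpi, hζ]
    rw [hp, htrace.apply_axisTuple T hsymm i₀]
    simp [L, hbasis, Finset.prod_ite]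
  conv_lhs => rw [hT]
  simp [L, hζ]

end Symmetric

theorem IsTraceless.eq_zero_of_apply_snoc_eq_zero
    {T : MultilinearMap ℝ (fun _ : Fin (n + 1) => ℝ × ℝ) F}
    (hsymm : ∀ (v : Fin (n + 1) → ℝ × ℝ) (σ : Equiv.Perm (Fin (n + 1))), T (v ∘ σ) = T v)
    (htrace : IsTraceless T) {θ : ℝ} (hθ : Real.sin ((n + 1) * θ) ≠ 0)
    (h₁ : T (Fin.snoc (fun _ => (1, 0)) (0, 1)) = 0)
    (h₂ : T (Fin.snoc (fun _ => (Real.cos θ, Real.sin θ)) (-Real.sin θ, Real.cos θ)) = 0) :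
    T = 0 := by
  set v : Fin (n + 1) → ℝ × ℝ :=
    Fin.snoc (fun _ => (Real.cos θ, Real.sin θ)) (-Real.sin θ, Real.cos θ) with hv
  have hB : T (axisTuple {Fin.last n}) = 0 := by
    convert h₁ using 2
    ext1 i
    induction i using Fin.lastCases <;> simp [axisTuple, (Fin.castSucc_lt_last _).ne]
  -- in complex coordinates `v = (e^{iθ}, …, e^{iθ}, i e^{iθ})`
  have hprod : ∏ i, ((v i).1 + (v i).2 * I : ℂ) =
      I * (Real.cos ((n + 1) * θ) + Real.sin ((n + 1) * θ) * I) := by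
    have hangle : ((n + 1 : ℕ) : ℂ) * θ = (((n + 1) * θ : ℝ) : ℂ) := by push_cast; ring
    rw [Fin.prod_univ_castSucc, ofReal_cos, ofReal_sin, ← hangle, ← cos_add_sin_mul_I_pow]
    simp only [hv, Fin.snoc_castSucc, Fin.snoc_last, Finset.prod_const, Finset.card_univ,
      Fintype.card_fin, ofReal_cos, ofReal_sin, ofReal_neg, pow_succ]
    ring_nf
    rw [I_sq]
    ring
  have hA : T (axisTuple ∅) = 0 := by
    rw [htrace.apply_eq T hsymm (Fin.last n), hB, smul_zero, add_zero, hprod] at h₂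
    simp only [mul_re, I_re, I_im, add_re, add_im, ofReal_re, ofReal_im, mul_im] at h₂
    refine (smul_eq_zero.mp h₂).resolve_left ?_
    simpa using hθ
  ext w
  rw [htrace.apply_eq T hsymm (Fin.last n) w, hA, hB]
  simp

end TracelessTensor

theorem Irrational.sin_natCast_mul_mul_pi_ne_zero {α : ℝ} (hα : Irrational α) {n : ℕ}
    (hn : n ≠ 0) : Real.sin (n * (α * Real.pi)) ≠ 0 := by
  intro hsin
  obtain ⟨k, hk⟩ := Real.sin_eq_zero_iff.mp hsin
  refine (hα.natCast_mul hn).ne_int k (mul_right_cancel₀ Real.pi_ne_zero ?_)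
  rw [hk]
  ring

theorem frequently_nhdsNE_zero_of_forall_Icc {p : ℝ → Prop} {h : ℝ} (hh : 0 < h)
    (hp : ∀ r, 0 ≤ r → r ≤ h → p r) : ∃ᶠ t in 𝓝[≠] (0 : ℝ), p t := by
  have hnear : ∀ᶠ t in 𝓝[>] (0 : ℝ), p t := by
    filter_upwards [Ioo_mem_nhdsGT hh] with r hr using hp r hr.1.le hr.2.le
  exact hnear.frequently.filter_mono (nhdsGT_le_nhdsNE 0)

theorem iteratedFDeriv_eq_zero_of_helmholtz_of_robin_rays {u : ℝ × ℝ → ℂ} {x : ℝ × ℝ}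
    {lam θ : ℝ} {c₁ c₂ : ℂ} (hu : AnalyticAt ℝ u x)
    (hpde : ∀ᶠ y in 𝓝 x, pd1 (pd1 u) y + pd2 (pd2 u) y + (lam : ℂ) * u y = 0)
    (hθ : ∀ n : ℕ, Real.sin ((n + 1) * θ) ≠ 0)
    (hΓ₁ : ∃ᶠ t in 𝓝[≠] (0 : ℝ),
      fderiv ℝ u (x + t • (1, 0)) (0, 1) + c₁ • u (x + t • (1, 0)) = 0)
    (hΓ₂ : ∃ᶠ t in 𝓝[≠] (0 : ℝ),
      fderiv ℝ u (x + t • (Real.cos θ, Real.sin θ)) (-Real.sin θ, Real.cos θ) +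
        c₂ • u (x + t • (Real.cos θ, Real.sin θ)) = 0)
    (hx : u x = 0) (k : ℕ) :
    iteratedFDeriv ℝ k u x = 0 := by
  have hsymm := fun n => hu.contDiffAt.iteratedFDeriv_comp_perm (n := n)
  induction k using Nat.strong_induction_on with
  | _ k ih =>
  cases k with
  | zero => ext v; simpa using hx
  | succ m =>
    refine ContinuousMultilinearMap.toMultilinearMap_injective
      (IsTraceless.eq_zero_of_apply_snoc_eq_zero (hsymm _) ?_ (hθ m) ?_ ?_)
    · cases m with
      | zero => exact fun v i j hij => absurd (Subsingleton.elim (α := Fin 1) i j) hij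
      | succ k =>
        refine isTraceless_of_apply_snoc_snoc _ (hsymm _) fun w => ?_
        simpa [ih k (by omega)] using hu.iteratedFDeriv_helmholtz hpde k w
    · simpa [ih m (by omega)] using hu.iteratedFDeriv_snoc_add_smul_eq_zero hΓ₁ m
    · simpa [ih m (by omega)] using hu.iteratedFDeriv_snoc_add_smul_eq_zero hΓ₂ m

theorem stmt9_general
    (Ω : Set (ℝ × ℝ))
    (lam : ℝ)
    (u : ℝ × ℝ → ℂ)
    (hu_an : AnalyticOnNhd ℝ u Ω)
    (hu_eq : ∀ x ∈ Ω, pd1 (pd1 u) x + pd2 (pd2 u) x + (lam : ℂ) * u x = 0)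
    (α : ℝ) (hirr : Irrational α)
    (θ₀ : ℝ) (hθ₀ : θ₀ = α * Real.pi)
    (h : ℝ) (hh : 0 < h)
    (hdisk : ∀ x : ℝ × ℝ, x.1 ^ 2 + x.2 ^ 2 ≤ h ^ 2 → x ∈ Ω)
    (C₁ C₂ : ℂ)
    (hbc₁ : ∀ r : ℝ, 0 ≤ r → r ≤ h →
      fderiv ℝ u (r, 0) (0, -1) + C₁ * u (r, 0) = 0)
    (hbc₂ : ∀ r : ℝ, 0 ≤ r → r ≤ h →
      fderiv ℝ u (r * Real.cos θ₀, r * Real.sin θ₀) (-Real.sin θ₀, Real.cos θ₀)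
        + C₂ * u (r * Real.cos θ₀, r * Real.sin θ₀) = 0) :
    (u (0, 0) = 0 → ∀ k : ℕ, iteratedFDeriv ℝ k u (0, 0) = 0) ∧
    (u (0, 0) ≠ 0 → iteratedFDeriv ℝ 0 u (0, 0) ≠ 0) := by
  refine ⟨fun hu0 => ?_, fun hu0 h0 => hu0 (by simpa using congr($h0 (fun _ => (0, 0))))⟩
  have hΩ : Ω ∈ 𝓝 ((0 : ℝ), (0 : ℝ)) :=
    mem_of_superset ((isOpen_lt (f := fun x : ℝ × ℝ => x.1 ^ 2 + x.2 ^ 2) (by fun_prop)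
      continuous_const).mem_nhds (by simpa using pow_pos hh 2)) fun x hx => hdisk x hx.le
  refine iteratedFDeriv_eq_zero_of_helmholtz_of_robin_rays (θ := θ₀) (c₁ := -C₁) (c₂ := C₂)
    (hu_an _ (mem_of_mem_nhds hΩ)) (eventually_of_mem hΩ hu_eq)
    (fun n => by exact_mod_cast hθ₀ ▸ hirr.sin_natCast_mul_mul_pi_ne_zero n.succ_ne_zero)
    (frequently_nhdsNE_zero_of_forall_Icc hh fun r hr₀ hrh => ?_)
    (frequently_nhdsNE_zero_of_forall_Icc hh fun r hr₀ hrh => by simpa using hbc₂ r hr₀ hrh) hu0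
  have hbc := hbc₁ r hr₀ hrh
  rw [show ((0 : ℝ), (-1 : ℝ)) = -(0, 1) by simp, map_neg] at hbc
  simp only [Prod.smul_mk, smul_eq_mul, mul_one, mul_zero, Prod.mk_add_mk, zero_add]
  linear_combination -hbc

/-- Two generalized singular lines (constant parameters `C₁, C₂`) intersecting at the origin
at an irrational angle `θ₀ = απ`, `α ∈ (0,2)` irrational: if `u 0 = 0` the vanishing order is
infinite; if `u 0 ≠ 0` the vanishing order is `0`. -/
theorem stmt9
    (Ω : Set (ℝ × ℝ)) (hΩ : IsOpen Ω)
    (lam : ℝ) (hlam : 0 < lam)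
    (u : ℝ × ℝ → ℂ)
    (hu_an : AnalyticOnNhd ℝ u Ω)
    (hu_eq : ∀ x ∈ Ω, pd1 (pd1 u) x + pd2 (pd2 u) x + (lam : ℂ) * u x = 0)
    (α : ℝ) (hα : α ∈ Set.Ioo (0 : ℝ) 2) (hirr : Irrational α)
    (θ₀ : ℝ) (hθ₀ : θ₀ = α * Real.pi)
    (h : ℝ) (hh : 0 < h)
    (hdisk : ∀ x : ℝ × ℝ, x.1 ^ 2 + x.2 ^ 2 ≤ h ^ 2 → x ∈ Ω)
    (C₁ C₂ : ℂ)
    (hbc₁ : ∀ r : ℝ, 0 ≤ r → r ≤ h →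
      fderiv ℝ u (r, 0) (0, -1) + C₁ * u (r, 0) = 0)
    (hbc₂ : ∀ r : ℝ, 0 ≤ r → r ≤ h →
      fderiv ℝ u (r * Real.cos θ₀, r * Real.sin θ₀) (-Real.sin θ₀, Real.cos θ₀)
        + C₂ * u (r * Real.cos θ₀, r * Real.sin θ₀) = 0) :
    (u (0, 0) = 0 → ∀ k : ℕ, iteratedFDeriv ℝ k u (0, 0) = 0) ∧
    (u (0, 0) ≠ 0 → iteratedFDeriv ℝ 0 u (0, 0) ≠ 0) :=
  stmt9_general Ω lam u hu_an hu_eq α hirr θ₀ hθ₀ h hh hdisk C₁ C₂ hbc₁ hbc₂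
end
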